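/- arXiv:1304.8087 — 5 statements merged into one kernel-verified Lean document; each statement's English description precedes it below -/
import Mathlib

section
/- Sunflower counting lemma: Let T_1, T_2, …, T_q (q ≥ 2) be subsets of [R] forming a sunflower with core T*, i.e., T_i ∩ T_j ⊆ T* for all i ≠ j. If |T_1| + |T_2| + ⋯ + |T_q| ≥ R + (q−1)θ for some integer θ ≥ 0, then |T*| ≥ θ; moreover, if |T*| = θ, then T* ⊆ T_i for all 1 ≤ i ≤ q. -/
/-!
Count incidences `(i, x)` with `x ∈ T i`. A point outside the core lies in at most one petal,
and a point `x` of the core lies in `q - d x` petals, where `d x` is the number of petals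
missing it. Hence `∑ |T i| + ∑_{x ∈ T*} d x ≤ R + (q - 1)|T*|`, and comparing with the
hypothesis gives `(q - 1)θ + ∑_{x ∈ T*} d x ≤ (q - 1)|T*|`. With `q ≥ 2` this yields
`θ ≤ |T*|`, and equality forces every `d x` to vanish.
-/

open Finset

namespace Finset

variable {ι α : Type*} [Fintype ι] [DecidableEq α]

def IsSunflower (T : ι → Finset α) (S : Finset α) : Prop :=
  ∀ i j, i ≠ j → T i ∩ T j ⊆ S

theorem sum_card_eq_sum_card_filter_mem [Fintype α] (T : ι → Finset α) :
    ∑ i, #(T i) = ∑ x, #{i | x ∈ T i} := by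
  simp_rw [card_eq_sum_ones, sum_filter]
  rw [← sum_comm]
  simp

theorem IsSunflower.card_filter_mem_le_one {T : ι → Finset α} {S : Finset α}
    (hT : IsSunflower T S) {x : α} (hx : x ∉ S) : #{i | x ∈ T i} ≤ 1 :=
  card_le_one.2 fun i hi j hj => by
    by_contra hij
    simp only [mem_filter, mem_univ, true_and] at hi hj
    exact hx (hT i j hij (mem_inter.2 ⟨hi, hj⟩))

theorem IsSunflower.sum_card_add_sum_card_filter_not_mem_le [Fintype α] {T : ι → Finset α}
    {S : Finset α} (hT : IsSunflower T S) :
    ∑ i, #(T i) + ∑ x ∈ S, #{i | x ∉ T i} ≤ Fintype.card α + (Fintype.card ι - 1) * #S := by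
  have hpoint (x : α) : #{i | x ∈ T i} + (if x ∈ S then #{i | x ∉ T i} else 0) ≤
      1 + if x ∈ S then Fintype.card ι - 1 else 0 := by
    split_ifs with hx
    · have := card_filter_add_card_filter_not (s := univ) (fun i => x ∈ T i)
      rw [card_univ] at this
      omega
    · simpa using hT.card_filter_mem_le_one hx
  calc ∑ i, #(T i) + ∑ x ∈ S, #{i | x ∉ T i}
      = ∑ x, (#{i | x ∈ T i} + if x ∈ S then #{i | x ∉ T i} else 0) := by
        rw [sum_card_eq_sum_card_filter_mem, sum_add_distrib, sum_ite_mem, univ_inter]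
    _ ≤ ∑ x : α, (1 + if x ∈ S then Fintype.card ι - 1 else 0) := sum_le_sum fun x _ => hpoint x
    _ = Fintype.card α + (Fintype.card ι - 1) * #S := by
        rw [sum_add_distrib, sum_ite_mem, univ_inter]
        simp [mul_comm]

end Finset

/-- **Sunflower counting lemma.** If `T 1, …, T q` (`q ≥ 2`) form a sunflower on `[R]`
with core `Tstar` and `∑ |T i| ≥ R + (q-1)·θ`, then `|Tstar| ≥ θ`; moreover if
`|Tstar| = θ` then `Tstar ⊆ T i` for all `i`. -/
theorem sunflower_counting
    (R q θ : ℕ) (hq : 2 ≤ q)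
    (T : Fin q → Finset (Fin R)) (Tstar : Finset (Fin R))
    (hsun : ∀ i j : Fin q, i ≠ j → T i ∩ T j ⊆ Tstar)
    (hcard : R + (q - 1) * θ ≤ ∑ i, (T i).card) :
    θ ≤ Tstar.card ∧ (Tstar.card = θ → ∀ i, Tstar ⊆ T i) := by
  have key := IsSunflower.sum_card_add_sum_card_filter_not_mem_le hsun
  simp only [Fintype.card_fin] at key
  have hθ : (q - 1) * θ ≤ (q - 1) * #Tstar := by omega
  refine ⟨Nat.le_of_mul_le_mul_left hθ (by omega), fun hcore i x hx => ?_⟩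
  have hmissing : ∑ x ∈ Tstar, #{i | x ∉ T i} = 0 := by rw [hcore] at key; omega
  have hnone : #{j | x ∉ T j} = 0 := sum_eq_zero_iff.1 hmissing x hx
  simpa using filter_eq_empty_iff.1 (card_eq_zero.1 hnone) (mem_univ i)
end

section
/- Singular value inequality for products: Let P be a p×m real matrix and Q an m×q real matrix, and let σ_j(·) denote the j-th largest singular value of a matrix. Then for all positive integers ℓ and i with ℓ ≤ min{p, q}, ℓ ≤ i ≤ min{m, q}, and ℓ + m − i ≤ min{p, m}, one has σ_ℓ(PQ) ≥ σ_{ℓ+m−i}(P) · σ_i(Q). -/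
/-- Euclidean norm of a finitely-indexed family of reals. -/
noncomputable def enorm {ι : Type*} [Fintype ι] (x : ι → ℝ) : ℝ :=
  Real.sqrt (∑ i, (x i) ^ 2)

/-- The `j`-th largest singular value of a real matrix (for `1 ≤ j ≤ min(p,m)`),
via the Courant–Fischer (max–min) characterization:
`σ_j(M) = max { s ≥ 0 | ∃ V of dimension j, ∀ x ∈ V, s‖x‖ ≤ ‖Mx‖ }`. -/
noncomputable def sval {p m : ℕ} (M : Matrix (Fin p) (Fin m) ℝ) (j : ℕ) : ℝ :=
  sSup {s : ℝ | 0 ≤ s ∧ ∃ V : Submodule ℝ (Fin m → ℝ), Module.finrank ℝ V = j ∧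
    ∀ x ∈ V, s * _root_.enorm x ≤ _root_.enorm (M.mulVec x)}

/-!
If `V_P` (of dimension `k = ℓ + m - i`) witnesses `‖P y‖ ≥ a ‖y‖` and `V_Q` (of dimension `i`)
witnesses `‖Q x‖ ≥ b ‖x‖`, then `V_Q ∩ Q⁻¹(V_P)` has dimension at least `i + k - m = ℓ`, and on it
`‖P Q x‖ ≥ a ‖Q x‖ ≥ a b ‖x‖`. Taking suprema over `a` and `b` gives the inequality.
-/

open Module Matrix

lemma enorm_eq_norm_toLp {ι : Type*} [Fintype ι] (x : ι → ℝ) :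
    _root_.enorm x = ‖WithLp.toLp 2 x‖ := by
  simp [_root_.enorm, EuclideanSpace.norm_eq]

lemma exists_enorm_mulVec_le {ι κ : Type*} [Fintype ι] [Fintype κ] (M : Matrix ι κ ℝ) :
    ∃ C, ∀ x, _root_.enorm (M *ᵥ x) ≤ C * _root_.enorm x := by
  classical
  let f := LinearMap.toContinuousLinearMap (toEuclideanLin M)
  refine ⟨‖f‖, fun x => ?_⟩
  simpa [enorm_eq_norm_toLp, f, toLpLin_toLp] using f.le_opNorm (WithLp.toLp 2 x)

-- Relies on `sSup` of an empty or unbounded set of reals being `0`.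
lemma Real.sSup_mul_sSup_le {A B : Set ℝ} {c : ℝ} (hB : ∀ b ∈ B, 0 ≤ b) (hc : 0 ≤ c)
    (h : ∀ a ∈ A, ∀ b ∈ B, a * b ≤ c) : sSup A * sSup B ≤ c := by
  have hB0 : 0 ≤ sSup B := Real.sSup_nonneg hB
  have hA : ∀ a ∈ A, a * sSup B ≤ c := by
    intro a ha
    rcases le_or_gt a 0 with ha0 | ha0
    · exact (mul_nonpos_of_nonpos_of_nonneg ha0 hB0).trans hc
    · rw [← le_div_iff₀' ha0]
      exact Real.sSup_le (fun b hb => (le_div_iff₀' ha0).2 (h a ha b hb)) (by positivity)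
  rcases hB0.eq_or_lt with hB0 | hB0
  · rw [← hB0, mul_zero]
    exact hc
  · rw [← le_div_iff₀ hB0]
    exact Real.sSup_le (fun a ha => (le_div_iff₀ hB0).2 (hA a ha)) (by positivity)

section FiniteDimensional

variable {K E F : Type*} [DivisionRing K] [AddCommGroup E] [Module K E] [AddCommGroup F]
  [Module K F]

lemma Submodule.exists_le_finrank_eq (W : Submodule K E) [FiniteDimensional K W] {j : ℕ}
    (hj : j ≤ finrank K W) : ∃ U ≤ W, finrank K U = j := by
  obtain ⟨f, hf⟩ := exists_linearIndependent_of_le_finrank hj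
  refine ⟨span K (Set.range (W.subtype ∘ f)), ?_, ?_⟩
  · rw [span_le]
    rintro _ ⟨t, rfl⟩
    exact (f t).2
  · rw [finrank_span_eq_card (hf.map' W.subtype W.ker_subtype), Fintype.card_fin]

variable [FiniteDimensional K E] [FiniteDimensional K F]

lemma Submodule.finrank_add_finrank_le_finrank_inf_add (V W : Submodule K E) :
    finrank K V + finrank K W ≤ finrank K ↥(V ⊓ W) + finrank K E := by
  have := (V ⊔ W).finrank_le
  have := finrank_sup_add_finrank_inf_eq V W
  omega

lemma Submodule.finrank_add_finrank_le_finrank_comap_add (f : E →ₗ[K] F) (W : Submodule K F) :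
    finrank K E + finrank K W ≤ finrank K (W.comap f) + finrank K F := by
  have hker : LinearMap.ker (W.mkQ ∘ₗ f) = W.comap f := by
    rw [LinearMap.ker_comp, ker_mkQ]
  have rank_nullity := LinearMap.finrank_range_add_finrank_ker (W.mkQ ∘ₗ f)
  have := (LinearMap.range (W.mkQ ∘ₗ f)).finrank_le
  have := W.finrank_quotient_add_finrank
  rw [hker] at rank_nullity
  omega

end FiniteDimensional

def svalSet {p m : ℕ} (M : Matrix (Fin p) (Fin m) ℝ) (j : ℕ) : Set ℝ :=
  {s : ℝ | 0 ≤ s ∧ ∃ V : Submodule ℝ (Fin m → ℝ), finrank ℝ V = j ∧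
    ∀ x ∈ V, s * _root_.enorm x ≤ _root_.enorm (M.mulVec x)}

lemma sval_eq_sSup_svalSet {p m : ℕ} (M : Matrix (Fin p) (Fin m) ℝ) (j : ℕ) :
    sval M j = sSup (svalSet M j) :=
  rfl

lemma svalSet_bddAbove {p m : ℕ} (M : Matrix (Fin p) (Fin m) ℝ) {j : ℕ} (hj : 1 ≤ j) :
    BddAbove (svalSet M j) := by
  obtain ⟨C, hC⟩ := exists_enorm_mulVec_le M
  refine ⟨C, ?_⟩
  rintro s ⟨-, V, hV, hle⟩
  have hVne : V ≠ ⊥ := by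
    rintro rfl
    rw [finrank_bot] at hV
    omega
  obtain ⟨x, hxV, hx0⟩ := Submodule.exists_mem_ne_zero_of_ne_bot hVne
  have hx : 0 < _root_.enorm x := by
    rw [enorm_eq_norm_toLp, norm_pos_iff]
    simpa using hx0
  exact le_of_mul_le_mul_right ((hle x hxV).trans (hC x)) hx

lemma mul_mem_svalSet_mul {p m q : ℕ} (P : Matrix (Fin p) (Fin m) ℝ)
    (Q : Matrix (Fin m) (Fin q) ℝ) {a b : ℝ} {k i ℓ : ℕ} (hk : k + i = ℓ + m)
    (ha : a ∈ svalSet P k) (hb : b ∈ svalSet Q i) : a * b ∈ svalSet (P * Q) ℓ := by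
  obtain ⟨ha0, VP, hVP, hPle⟩ := ha
  obtain ⟨hb0, VQ, hVQ, hQle⟩ := hb
  have hdim : ℓ ≤ finrank ℝ ↥(VQ ⊓ VP.comap Q.mulVecLin) := by
    have := VQ.finrank_add_finrank_le_finrank_inf_add (VP.comap Q.mulVecLin)
    have := VP.finrank_add_finrank_le_finrank_comap_add Q.mulVecLin
    simp only [finrank_fin_fun] at *
    omega
  obtain ⟨V, hVle, hV⟩ := Submodule.exists_le_finrank_eq _ hdim
  refine ⟨mul_nonneg ha0 hb0, V, hV, fun x hx => ?_⟩
  obtain ⟨hxQ, hxP⟩ := hVle hx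
  calc a * b * _root_.enorm x = a * (b * _root_.enorm x) := mul_assoc _ _ _
    _ ≤ a * _root_.enorm (Q *ᵥ x) := mul_le_mul_of_nonneg_left (hQle x hxQ) ha0
    _ ≤ _root_.enorm (P *ᵥ Q *ᵥ x) := hPle _ hxP
    _ = _root_.enorm ((P * Q) *ᵥ x) := by rw [mulVec_mulVec]

theorem sval_product_general
    (p m q : ℕ) (P : Matrix (Fin p) (Fin m) ℝ) (Q : Matrix (Fin m) (Fin q) ℝ)
    (ℓ i : ℕ) (hℓ1 : 1 ≤ ℓ)
    (hi : i ≤ min m q) :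
    sval P (ℓ + m - i) * sval Q i ≤ sval (P * Q) ℓ := by
  have hk : ℓ + m - i + i = ℓ + m := by omega
  simp only [sval_eq_sSup_svalSet]
  refine Real.sSup_mul_sSup_le (fun b hb => hb.1) (Real.sSup_nonneg fun s hs => hs.1) ?_
  intro a ha b hb
  exact le_csSup (svalSet_bddAbove (P * Q) hℓ1) (mul_mem_svalSet_mul P Q hk ha hb)

/-- **Singular value inequality for products:** `σ_ℓ(PQ) ≥ σ_{ℓ+m-i}(P) · σ_i(Q)`. -/
theorem sval_product
    (p m q : ℕ) (P : Matrix (Fin p) (Fin m) ℝ) (Q : Matrix (Fin m) (Fin q) ℝ)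
    (ℓ i : ℕ) (hℓ1 : 1 ≤ ℓ) (hi1 : 1 ≤ i)
    (hℓ : ℓ ≤ min p q) (hiℓ : ℓ ≤ i) (hi : i ≤ min m q)
    (hsum : ℓ + m - i ≤ min p m) :
    sval P (ℓ + m - i) * sval Q i ≤ sval (P * Q) ℓ :=
  sval_product_general p m q P Q ℓ i hℓ1 hi
end

section
/- ℓ₁-normalization error lemma: Let ε > 0, λ ≥ 0, let v ∈ ℝⁿ be a vector with ‖v‖₁ ∈ [1 − ε/4, 1 + ε/4], and let u ∈ ℝⁿ be a probability vector (all entries nonnegative with Σ_i u_i = 1). If ‖v − λu‖₂ ≤ ε/(4√n), then 1 − ε/2 ≤ λ ≤ 1 + ε/2 and ‖v − u‖₂ ≤ ε. -/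
/-!
The ℓ₁ and ℓ₂ norms are comparable, `‖x‖₁ ≤ √n ‖x‖₂`, so `v` and `λu` are within `ε/4` in ℓ₁.
Since `λu` is nonnegative with `‖λu‖₁ = λ`, the reverse triangle inequality for `‖·‖₁` puts `λ`
within `ε/4` of `‖v‖₁`, hence within `ε/2` of `1`. Finally
`‖v - u‖₂ ≤ ‖v - λu‖₂ + |λ - 1| ‖u‖₂ ≤ ε/4 + ε/2`, as `‖u‖₂ ≤ ‖u‖₁ = 1`.
-/

open Finset

lemma norm_sub_le_norm_sub_smul_add {E : Type*} [SeminormedAddCommGroup E] [NormedSpace ℝ E]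
    (x y : E) (c : ℝ) : ‖x - y‖ ≤ ‖x - c • y‖ + |c - 1| * ‖y‖ := calc
  ‖x - y‖ = ‖(x - c • y) + (c - 1) • y‖ := by congr 1; module
  _ ≤ ‖x - c • y‖ + ‖(c - 1) • y‖ := norm_add_le _ _
  _ = ‖x - c • y‖ + |c - 1| * ‖y‖ := by rw [norm_smul, Real.norm_eq_abs]

section

variable {ι : Type*} [Fintype ι]

lemma sqrt_sum_sq_eq_norm_toLp (w : ι → ℝ) :
    √(∑ i, w i ^ 2) = ‖WithLp.toLp 2 w‖ := by
  simp [EuclideanSpace.norm_eq]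

lemma sqrt_sum_sq_sub_mul_eq_norm_sub_smul (v u : ι → ℝ) (c : ℝ) :
    √(∑ i, (v i - c * u i) ^ 2) = ‖WithLp.toLp 2 v - c • WithLp.toLp 2 u‖ :=
  sqrt_sum_sq_eq_norm_toLp _

lemma sum_abs_le_sqrt_card_mul_sqrt_sum_sq (w : ι → ℝ) :
    ∑ i, |w i| ≤ √(Fintype.card ι) * √(∑ i, w i ^ 2) := by
  simpa [sq_abs] using Real.sum_mul_le_sqrt_mul_sqrt univ (fun _ ↦ (1 : ℝ)) (fun i ↦ |w i|)

lemma abs_sum_abs_sub_sum_abs_le (v w : ι → ℝ) :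
    |(∑ i, |v i|) - ∑ i, (|w i|)| ≤ ∑ i, |v i - w i| := by
  rw [← sum_sub_distrib]
  exact (abs_sum_le_sum_abs _ _).trans
    (sum_le_sum fun i _ ↦ abs_abs_sub_abs_le_abs_sub (v i) (w i))

lemma abs_sum_abs_sub_le_sum_abs_sub_mul {u : ι → ℝ} (hu0 : ∀ i, 0 ≤ u i) (hu1 : ∑ i, u i = 1)
    (v : ι → ℝ) {c : ℝ} (hc : 0 ≤ c) :
    |∑ i, |v i| - c| ≤ ∑ i, |v i - c * u i| := by
  have hsum : ∑ i, |c * u i| = c := by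
    simp_rw [abs_of_nonneg (mul_nonneg hc (hu0 _)), ← mul_sum, hu1, mul_one]
  simpa only [hsum] using abs_sum_abs_sub_sum_abs_le v fun i ↦ c * u i

lemma norm_toLp_le_sum_of_nonneg {u : ι → ℝ} (hu0 : ∀ i, 0 ≤ u i) :
    ‖WithLp.toLp 2 u‖ ≤ ∑ i, u i := by
  rw [← sqrt_sum_sq_eq_norm_toLp, Real.sqrt_le_iff]
  exact ⟨sum_nonneg fun i _ ↦ hu0 i, sum_sq_le_sq_sum_of_nonneg fun i _ ↦ hu0 i⟩

end

theorem l1_normalization_error_general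
    (n : ℕ) (ε lam : ℝ) (hlam : 0 ≤ lam)
    (v u : Fin n → ℝ)
    (hv1 : 1 - ε / 4 ≤ ∑ i, |v i|) (hv2 : ∑ i, |v i| ≤ 1 + ε / 4)
    (hu0 : ∀ i, 0 ≤ u i) (hu1 : ∑ i, u i = 1)
    (hclose : Real.sqrt (∑ i, (v i - lam * u i) ^ 2) ≤ ε / (4 * Real.sqrt n)) :
    (1 - ε / 2 ≤ lam ∧ lam ≤ 1 + ε / 2) ∧
      Real.sqrt (∑ i, (v i - u i) ^ 2) ≤ ε := by
  have hn : 1 ≤ √(n : ℝ) := by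
    rcases n with _ | n
    · simp at hu1
    · simp
  have hl1 : ∑ i, |v i - lam * u i| ≤ ε / 4 := calc
    _ ≤ √n * √(∑ i, (v i - lam * u i) ^ 2) := by
      simpa using sum_abs_le_sqrt_card_mul_sqrt_sum_sq fun i ↦ v i - lam * u i
    _ ≤ √n * (ε / (4 * √n)) := by gcongr
    _ = ε / 4 := by field_simp
  have hlam_one : |lam - 1| ≤ ε / 2 := by
    have hlam_l1 := (abs_sum_abs_sub_le_sum_abs_sub_mul hu0 hu1 v hlam).trans hl1
    rw [abs_le] at hlam_l1 ⊢
    constructor <;> linarith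
  have hε : 0 ≤ ε := by linarith [(abs_nonneg (lam - 1)).trans hlam_one]
  refine ⟨by constructor <;> linarith [abs_le.1 hlam_one], ?_⟩
  have hclose' : ‖WithLp.toLp 2 v - lam • WithLp.toLp 2 u‖ ≤ ε / 4 := by
    rw [← sqrt_sum_sq_sub_mul_eq_norm_sub_smul]
    exact hclose.trans (div_le_div_of_nonneg_left hε (by norm_num) (by linarith))
  calc √(∑ i, (v i - u i) ^ 2) = ‖WithLp.toLp 2 v - WithLp.toLp 2 u‖ := by
        simpa using sqrt_sum_sq_sub_mul_eq_norm_sub_smul v u 1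
    _ ≤ ε / 4 + ε / 2 * 1 := by
        grw [norm_sub_le_norm_sub_smul_add _ _ lam, hclose', hlam_one,
          (norm_toLp_le_sum_of_nonneg hu0).trans_eq hu1]
    _ ≤ ε := by linarith

/-- **ℓ₁-normalization error lemma.** -/
theorem l1_normalization_error
    (n : ℕ) (ε lam : ℝ) (hε : 0 < ε) (hlam : 0 ≤ lam)
    (v u : Fin n → ℝ)
    (hv1 : 1 - ε / 4 ≤ ∑ i, |v i|) (hv2 : ∑ i, |v i| ≤ 1 + ε / 4)
    (hu0 : ∀ i, 0 ≤ u i) (hu1 : ∑ i, u i = 1)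
    (hclose : Real.sqrt (∑ i, (v i - lam * u i) ^ 2) ≤ ε / (4 * Real.sqrt n)) :
    (1 - ε / 2 ≤ lam ∧ lam ≤ 1 + ε / 2) ∧
      Real.sqrt (∑ i, (v i - u i) ^ 2) ≤ ε :=
  l1_normalization_error_general n ε lam hlam v u hv1 hv2 hu0 hu1 hclose
end

section
/- Existence of a simultaneously non-orthogonal direction: Let u_1, …, u_t ∈ ℝ^d satisfy ‖u_i‖₂ ≥ ε > 0 for all i ∈ [t]. Then there exists a unit vector w ∈ ℝ^d such that |⟨u_i, w⟩| > ε/(20·d·t) for all i ∈ [t]. -/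
/-!
Pick for each `uᵢ` a coordinate `jᵢ` with `d · uᵢⱼᵢ² ≥ ‖uᵢ‖² ≥ ε²`. Inside the cube `[-1, 1]^d`,
the slab `|⟨uᵢ, v⟩| ≤ |uᵢⱼᵢ| / (2t)` lies in the preimage of a box of relative volume `1 / (2t)`
under the linear map replacing the `jᵢ`-th coordinate by `⟨uᵢ, v⟩`, whose determinant is `uᵢⱼᵢ`.
So the `t` slabs cover at most half of the cube, and some nonzero `v` of the cube avoids all of
them. As `‖v‖₂ ≤ √d`, the unit vector `w = v / ‖v‖₂` satisfies `|⟨uᵢ, w⟩| > ε / (2dt)`.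
-/

open MeasureTheory Set

theorem div_le_abs_div_of_sq_le {ε a N d : ℝ} (hε : 0 ≤ ε) (hN : 0 < N) (hd : 0 < d)
    (hεa : ε ^ 2 ≤ d * a ^ 2) (hNd : N ^ 2 ≤ d) : ε / d ≤ |a| / N := by
  rw [div_le_div_iff₀ hd hN, ← pow_le_pow_iff_left₀ (by positivity) (by positivity) two_ne_zero]
  calc (ε * N) ^ 2 = ε ^ 2 * N ^ 2 := by ring
    _ ≤ d * a ^ 2 * d := by gcongr
    _ = (|a| * d) ^ 2 := by rw [mul_pow, sq_abs]; ring

section Fintype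

variable {ι : Type*} [Fintype ι]

theorem exists_sum_sq_le_card_mul_sq [Nonempty ι] (x : ι → ℝ) :
    ∃ j, ∑ k, x k ^ 2 ≤ Fintype.card ι * x j ^ 2 := by
  obtain ⟨j, hj⟩ := Finite.exists_max fun k => x k ^ 2
  exact ⟨j, by simpa using Finset.sum_le_card_nsmul Finset.univ _ _ fun k _ => hj k⟩

theorem sum_sq_le_card_of_mem_pi_Icc {v : ι → ℝ} (hv : v ∈ univ.pi fun _ => Icc (-1 : ℝ) 1) :
    ∑ k, v k ^ 2 ≤ Fintype.card ι := by
  simpa using Finset.sum_le_card_nsmul Finset.univ _ 1 fun k _ =>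
    (sq_le_one_iff_abs_le_one _).mpr (abs_le.mpr (hv k (mem_univ k)))

theorem sqrt_sum_sq_pos_of_ne_zero {v : ι → ℝ} (hv : v ≠ 0) : 0 < Real.sqrt (∑ k, v k ^ 2) := by
  obtain ⟨k, hk⟩ := Function.ne_iff.mp hv
  exact Real.sqrt_pos.mpr <| (pow_pos (abs_pos.mpr hk) 2).trans_le <| (sq_abs _).trans_le <|
    Finset.single_le_sum (fun k _ => sq_nonneg (v k)) (Finset.mem_univ k)

theorem sqrt_sum_sq_inv_smul_self {v : ι → ℝ} (hv : v ≠ 0) :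
    Real.sqrt (∑ k, ((Real.sqrt (∑ k, v k ^ 2))⁻¹ • v) k ^ 2) = 1 := by
  have hN := sqrt_sum_sq_pos_of_ne_zero hv
  simp only [Pi.smul_apply, smul_eq_mul, mul_pow, ← Finset.mul_sum]
  rw [Real.sqrt_mul (sq_nonneg _), Real.sqrt_sq (inv_nonneg.mpr hN.le), inv_mul_cancel₀ hN.ne']

end Fintype

section DecidableEq

variable {ι : Type*} [Fintype ι] [DecidableEq ι]

theorem det_updateRow_one (a : ι → ℝ) (j : ι) : (Matrix.updateRow 1 j a).det = a j := by
  have h := Matrix.det_updateRow_sum (1 : Matrix ι ι ℝ) j a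
  have hrow : ∑ k, a k • (1 : Matrix ι ι ℝ) k = a := by
    ext i
    simp [Matrix.one_apply]
  rwa [hrow, Matrix.det_one, smul_eq_mul, mul_one] at h

theorem volume_pi_update_Icc (j : ι) {δ : ℝ} (hδ : 0 ≤ δ) :
    volume (univ.pi (Function.update (fun _ => Icc (-1 : ℝ) 1) j (Icc (-δ) δ))) =
      ENNReal.ofReal δ * volume (univ.pi fun _ : ι => Icc (-1 : ℝ) 1) := by
  simp only [volume_pi_pi, ← Finset.mul_prod_erase _ _ (Finset.mem_univ j)]
  rw [Finset.prod_congr rfl fun k hk => by rw [Function.update_of_ne (Finset.ne_of_mem_erase hk)],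
    Function.update_self, ← mul_assoc, Real.volume_Icc, Real.volume_Icc, ← ENNReal.ofReal_mul hδ]
  ring_nf

theorem volume_pi_Icc_inter_abs_sum_mul_le_le (a : ι → ℝ) {j : ι} (ha : a j ≠ 0) {δ : ℝ}
    (hδ : 0 ≤ δ) :
    volume ((univ.pi fun _ => Icc (-1 : ℝ) 1) ∩ {v : ι → ℝ | |∑ k, a k * v k| ≤ δ}) ≤
      ENNReal.ofReal (δ / |a j|) * volume (univ.pi fun _ : ι => Icc (-1 : ℝ) 1) := by
  set L := Matrix.toLin' (Matrix.updateRow 1 j a)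
  have hdet : LinearMap.det L = a j := by rw [LinearMap.det_toLin', det_updateRow_one]
  have hsub : (univ.pi fun _ => Icc (-1 : ℝ) 1) ∩ {v : ι → ℝ | |∑ k, a k * v k| ≤ δ} ⊆
      L ⁻¹' univ.pi (Function.update (fun _ => Icc (-1 : ℝ) 1) j (Icc (-δ) δ)) := by
    rintro v ⟨hcube, hslab⟩ k -
    rw [Matrix.toLin'_apply, Matrix.updateRow_mulVec, Matrix.one_mulVec]
    rcases eq_or_ne k j with rfl | hk
    · simpa [abs_le, dotProduct] using hslab
    · simpa [hk] using hcube k (mem_univ k)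
  calc _ ≤ volume (L ⁻¹' univ.pi (Function.update (fun _ => Icc (-1 : ℝ) 1) j (Icc (-δ) δ))) :=
        measure_mono hsub
    _ = _ := by
      rw [Measure.addHaar_preimage_linearMap _ (hdet ▸ ha), hdet, volume_pi_update_Icc j hδ,
        ← mul_assoc, ← ENNReal.ofReal_mul (by positivity), abs_inv, inv_mul_eq_div]

theorem exists_mem_pi_Icc_ne_zero_forall_lt_abs_sum_mul [Nonempty ι] {κ : Type*} [Fintype κ]
    (a : κ → ι → ℝ) (j : κ → ι) (ha : ∀ i, a i (j i) ≠ 0) :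
    ∃ v ∈ univ.pi (fun _ : ι => Icc (-1 : ℝ) 1), v ≠ 0 ∧
      ∀ i, |a i (j i)| / (2 * Fintype.card κ) < |∑ k, a i k * v k| := by
  set C := univ.pi fun _ : ι => Icc (-1 : ℝ) 1
  set n := Fintype.card κ
  set bad : κ → Set (ι → ℝ) := fun i => {v | |∑ k, a i k * v k| ≤ |a i (j i)| / (2 * n)}
  have hC : volume C = ENNReal.ofReal 2 ^ Fintype.card ι := by
    simp only [C, volume_pi_pi, Real.volume_Icc, Finset.prod_const, Finset.card_univ]
    norm_num
  have hC₀ : volume C ≠ 0 := by simp [hC]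
  have hC_top : volume C ≠ ⊤ := by simp [hC]
  have hbad : ∀ i, volume (C ∩ bad i) ≤ ENNReal.ofReal (1 / (2 * n)) * volume C := fun i => by
    convert volume_pi_Icc_inter_abs_sum_mul_le_le (a i) (ha i)
      (δ := |a i (j i)| / (2 * n)) (by positivity) using 3
    field_simp [abs_ne_zero.mpr (ha i)]
  have hcard : (n : ENNReal) * ENNReal.ofReal (1 / (2 * n)) ≤ ENNReal.ofReal (1 / 2) := by
    rw [← ENNReal.ofReal_natCast, ← ENNReal.ofReal_mul (by positivity)]
    gcongr
    rcases n.eq_zero_or_pos with hn | hn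
    · simp [hn]
    · field_simp; rfl
  have hunion : volume (⋃ i, C ∩ bad i) < volume C :=
    calc volume (⋃ i, C ∩ bad i) ≤ ∑ i, volume (C ∩ bad i) := measure_iUnion_fintype_le _ _
      _ ≤ ∑ _i : κ, ENNReal.ofReal (1 / (2 * n)) * volume C := Finset.sum_le_sum fun i _ => hbad i
      _ ≤ ENNReal.ofReal (1 / 2) * volume C := by
        rw [Finset.sum_const, Finset.card_univ, nsmul_eq_mul, ← mul_assoc]
        gcongr
      _ < volume C := by
        simpa using (ENNReal.mul_lt_mul_iff_left hC₀ hC_top).mpr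
          (show ENNReal.ofReal (1 / 2) < 1 by norm_num)
  have hcover : ¬ C ⊆ (⋃ i, C ∩ bad i) ∪ {0} := fun h => by
    have := (measure_mono (μ := volume) h).trans (measure_union_le _ _)
    rw [measure_singleton, add_zero] at this
    exact this.not_gt hunion
  obtain ⟨v, hvC, hv⟩ := not_subset.mp hcover
  simp only [mem_union, mem_iUnion, mem_inter_iff, mem_singleton_iff, not_or, not_exists] at hv
  exact ⟨v, hvC, hv.2, fun i => not_le.mp fun h => hv.1 i ⟨hvC, h⟩⟩

end DecidableEq

/-- **Existence of a simultaneously non-orthogonal direction.** -/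
theorem simultaneously_nonorthogonal_direction
    (d t : ℕ) (hd : 0 < d) (ε : ℝ) (hε : 0 < ε)
    (u : Fin t → Fin d → ℝ)
    (hu : ∀ i, ε ≤ Real.sqrt (∑ j, (u i j) ^ 2)) :
    ∃ w : Fin d → ℝ, Real.sqrt (∑ j, (w j) ^ 2) = 1 ∧
      ∀ i, ε / (20 * (d : ℝ) * (t : ℝ)) < |∑ j, u i j * w j| := by
  have : Nonempty (Fin d) := ⟨⟨0, hd⟩⟩
  choose j hj using fun i => exists_sum_sq_le_card_mul_sq (u i)
  have hε_sq : ∀ i, ε ^ 2 ≤ d * u i (j i) ^ 2 := fun i => by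
    simpa using ((Real.le_sqrt' hε).mp (hu i)).trans (hj i)
  have hu₀ : ∀ i, u i (j i) ≠ 0 := fun i h => (pow_pos hε 2).not_ge (by simpa [h] using hε_sq i)
  obtain ⟨v, hv_cube, hv₀, hv⟩ := exists_mem_pi_Icc_ne_zero_forall_lt_abs_sum_mul u j hu₀
  set N := Real.sqrt (∑ k, v k ^ 2)
  have hN : 0 < N := sqrt_sum_sq_pos_of_ne_zero hv₀
  have hN_sq : N ^ 2 ≤ d := by
    simpa [N, Real.sq_sqrt (Finset.sum_nonneg fun k _ => sq_nonneg (v k))] using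
      sum_sq_le_card_of_mem_pi_Icc hv_cube
  refine ⟨N⁻¹ • v, sqrt_sum_sq_inv_smul_self hv₀, fun i => ?_⟩
  have ht : (0 : ℝ) < t := by exact_mod_cast i.pos
  have hdR : (0 : ℝ) < d := by exact_mod_cast hd
  simp only [Pi.smul_apply, smul_eq_mul, mul_left_comm _ N⁻¹, ← Finset.mul_sum, abs_mul,
    abs_inv, abs_of_pos hN]
  calc ε / (20 * d * t) < ε / d / (2 * t) := by
        rw [div_div, div_lt_div_iff_of_pos_left hε (by positivity) (by positivity)]
        nlinarith
    _ ≤ |u i (j i)| / N / (2 * t) :=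
        div_le_div_of_nonneg_right (div_le_abs_div_of_sq_le hε.le hN hdR (hε_sq i) hN_sq)
          (by positivity)
    _ = N⁻¹ * (|u i (j i)| / (2 * t)) := by ring
    _ < N⁻¹ * |∑ k, u i k * v k| := by gcongr; simpa using hv i
end

section
/- Projecting the components of a low-rank decomposition loses at most 3ε (hybrid argument): Let a_i ∈ ℝ^m, b_i ∈ ℝⁿ, c_i ∈ ℝ^p for i ∈ [R], and set T₀ = Σ_{i=1}^R a_i ⊗ b_i ⊗ c_i. Let Π_A, Π_B, Π_C be orthogonal projections onto subspaces of ℝ^m, ℝⁿ, ℝ^p respectively, such that the three unfoldings of T₀ satisfy ‖M_A − Π_A M_A‖_F ≤ ε, ‖M_B − Π_B M_B‖_F ≤ ε, and ‖M_C − Π_C M_C‖_F ≤ ε, where M_A (resp. M_B, M_C) is the mode-1 (resp. mode-2, mode-3) unfolding of T₀. Setting ã_i = Π_A a_i, b̃_i = Π_B b_i, c̃_i = Π_C c_i, one has ‖Σ_{i=1}^R a_i ⊗ b_i ⊗ c_i − Σ_{i=1}^R ã_i ⊗ b̃_i ⊗ c̃_i‖_F ≤ 3ε. -/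
/-- Mode-1 fiber of the rank-`R` tensor `∑ r, a r ⊗ b r ⊗ c r`, as a Euclidean vector. -/
noncomputable def fiberA {m n p R : ℕ} (a : Fin R → EuclideanSpace ℝ (Fin m))
    (b : Fin R → EuclideanSpace ℝ (Fin n)) (c : Fin R → EuclideanSpace ℝ (Fin p))
    (j : Fin n) (k : Fin p) : EuclideanSpace ℝ (Fin m) :=
  WithLp.toLp 2 (fun i => ∑ r, a r i * b r j * c r k)

/-- Mode-2 fiber of the rank-`R` tensor `∑ r, a r ⊗ b r ⊗ c r`, as a Euclidean vector. -/
noncomputable def fiberB {m n p R : ℕ} (a : Fin R → EuclideanSpace ℝ (Fin m))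
    (b : Fin R → EuclideanSpace ℝ (Fin n)) (c : Fin R → EuclideanSpace ℝ (Fin p))
    (i : Fin m) (k : Fin p) : EuclideanSpace ℝ (Fin n) :=
  WithLp.toLp 2 (fun j => ∑ r, a r i * b r j * c r k)

/-- Mode-3 fiber of the rank-`R` tensor `∑ r, a r ⊗ b r ⊗ c r`, as a Euclidean vector. -/
noncomputable def fiberC {m n p R : ℕ} (a : Fin R → EuclideanSpace ℝ (Fin m))
    (b : Fin R → EuclideanSpace ℝ (Fin n)) (c : Fin R → EuclideanSpace ℝ (Fin p))
    (i : Fin m) (j : Fin n) : EuclideanSpace ℝ (Fin p) :=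
  WithLp.toLp 2 (fun k => ∑ r, a r i * b r j * c r k)

/-!
Hybrid argument: writing `T = ∑ aᵣ ⊗ bᵣ ⊗ cᵣ` and `ã = Π_A a` etc.,
`T - T̃ = ∑ (a - ã) ⊗ b ⊗ c + ∑ ã ⊗ (b - b̃) ⊗ c + ∑ ã ⊗ b̃ ⊗ (c - c̃)`.
Applying a linear map to the `r`-th factors of one mode applies it to every fiber of that mode,
so the first term has exactly the mode-1 unfolding error as Frobenius norm, and projecting the
factors of a mode contracts the Frobenius norm. Hence the last two terms are bounded by the mode-2
and mode-3 unfolding errors, and the triangle inequality gives `3ε`.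
-/

open Finset

theorem EuclideanSpace.norm_eq_sqrt_sum_sum_sum {ι κ μ : Type*} [Fintype ι] [Fintype κ]
    [Fintype μ] (u : EuclideanSpace ℝ (ι × κ × μ)) :
    ‖u‖ = √(∑ i, ∑ j, ∑ k, u (i, j, k) ^ 2) := by
  simp [EuclideanSpace.norm_eq, Fintype.sum_prod_type]

theorem Submodule.sub_starProjection_comp {ι 𝕜 E : Type*} [RCLike 𝕜]
    [NormedAddCommGroup E] [InnerProductSpace 𝕜 E] (K : Submodule 𝕜 E)
    [K.HasOrthogonalProjection] (f : ι → E) :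
    f - (fun i => K.starProjection (f i)) = fun i => Kᗮ.starProjection (f i) := by
  ext1; simp

section CPTensor

variable {m n p R : ℕ}

-- The tensor is a Euclidean vector indexed by triples, so its norm is the Frobenius norm.
noncomputable def cpTensor (a : Fin R → EuclideanSpace ℝ (Fin m))
    (b : Fin R → EuclideanSpace ℝ (Fin n)) (c : Fin R → EuclideanSpace ℝ (Fin p)) :
    EuclideanSpace ℝ (Fin m × Fin n × Fin p) :=
  WithLp.toLp 2 fun x => ∑ r, a r x.1 * b r x.2.1 * c r x.2.2

theorem cpTensor_sub_cpTensor (a a' : Fin R → EuclideanSpace ℝ (Fin m))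
    (b b' : Fin R → EuclideanSpace ℝ (Fin n)) (c c' : Fin R → EuclideanSpace ℝ (Fin p)) :
    cpTensor a b c - cpTensor a' b' c' =
      cpTensor (a - a') b c + cpTensor a' (b - b') c + cpTensor a' b' (c - c') := by
  ext x
  simp only [cpTensor, PiLp.sub_apply, PiLp.add_apply, Pi.sub_apply, ← sum_sub_distrib,
    ← sum_add_distrib]
  exact sum_congr rfl fun r _ => by ring

variable (a : Fin R → EuclideanSpace ℝ (Fin m)) (b : Fin R → EuclideanSpace ℝ (Fin n))
  (c : Fin R → EuclideanSpace ℝ (Fin p))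

theorem fiberA_eq_sum_smul (j : Fin n) (k : Fin p) :
    fiberA a b c j k = ∑ r, (b r j * c r k) • a r := by
  ext i
  simp only [fiberA, WithLp.ofLp_sum, WithLp.ofLp_smul, Finset.sum_apply, Pi.smul_apply,
    smul_eq_mul]
  exact sum_congr rfl fun r _ => by ring

theorem fiberB_eq_sum_smul (i : Fin m) (k : Fin p) :
    fiberB a b c i k = ∑ r, (a r i * c r k) • b r := by
  ext j
  simp only [fiberB, WithLp.ofLp_sum, WithLp.ofLp_smul, Finset.sum_apply, Pi.smul_apply,
    smul_eq_mul]
  exact sum_congr rfl fun r _ => by ring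

theorem fiberC_eq_sum_smul (i : Fin m) (j : Fin n) :
    fiberC a b c i j = ∑ r, (a r i * b r j) • c r := by
  ext k
  simp only [fiberC, WithLp.ofLp_sum, WithLp.ofLp_smul, Finset.sum_apply, Pi.smul_apply,
    smul_eq_mul]

theorem fiberA_map
    {F : Type*} [FunLike F (EuclideanSpace ℝ (Fin m)) (EuclideanSpace ℝ (Fin m))]
    [LinearMapClass F ℝ (EuclideanSpace ℝ (Fin m)) (EuclideanSpace ℝ (Fin m))] (L : F)
    (j : Fin n) (k : Fin p) : fiberA (fun r => L (a r)) b c j k = L (fiberA a b c j k) := by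
  simp [fiberA_eq_sum_smul]

theorem fiberB_map
    {F : Type*} [FunLike F (EuclideanSpace ℝ (Fin n)) (EuclideanSpace ℝ (Fin n))]
    [LinearMapClass F ℝ (EuclideanSpace ℝ (Fin n)) (EuclideanSpace ℝ (Fin n))] (L : F)
    (i : Fin m) (k : Fin p) : fiberB a (fun r => L (b r)) c i k = L (fiberB a b c i k) := by
  simp [fiberB_eq_sum_smul]

theorem fiberC_map
    {F : Type*} [FunLike F (EuclideanSpace ℝ (Fin p)) (EuclideanSpace ℝ (Fin p))]
    [LinearMapClass F ℝ (EuclideanSpace ℝ (Fin p)) (EuclideanSpace ℝ (Fin p))] (L : F)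
    (i : Fin m) (j : Fin n) : fiberC a b (fun r => L (c r)) i j = L (fiberC a b c i j) := by
  simp [fiberC_eq_sum_smul]

theorem norm_cpTensor_eq_fiberA :
    ‖cpTensor a b c‖ = √(∑ j, ∑ k, ‖fiberA a b c j k‖ ^ 2) := by
  simp only [EuclideanSpace.norm_eq_sqrt_sum_sum_sum, EuclideanSpace.norm_sq_eq, cpTensor, fiberA,
    Real.norm_eq_abs, sq_abs]
  rw [sum_comm]
  exact congrArg _ (sum_congr rfl fun j _ => sum_comm)

theorem norm_cpTensor_eq_fiberB :
    ‖cpTensor a b c‖ = √(∑ i, ∑ k, ‖fiberB a b c i k‖ ^ 2) := by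
  simp only [EuclideanSpace.norm_eq_sqrt_sum_sum_sum, EuclideanSpace.norm_sq_eq, cpTensor, fiberB,
    Real.norm_eq_abs, sq_abs]
  exact congrArg _ (sum_congr rfl fun i _ => sum_comm)

theorem norm_cpTensor_eq_fiberC :
    ‖cpTensor a b c‖ = √(∑ i, ∑ j, ‖fiberC a b c i j‖ ^ 2) := by
  simp only [EuclideanSpace.norm_eq_sqrt_sum_sum_sum, EuclideanSpace.norm_sq_eq, cpTensor, fiberC,
    Real.norm_eq_abs, sq_abs]

theorem norm_cpTensor_map_left_le
    {F : Type*} [FunLike F (EuclideanSpace ℝ (Fin m)) (EuclideanSpace ℝ (Fin m))]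
    [LinearMapClass F ℝ (EuclideanSpace ℝ (Fin m)) (EuclideanSpace ℝ (Fin m))] (L : F)
    (hL : ∀ x, ‖L x‖ ≤ ‖x‖) :
    ‖cpTensor (fun r => L (a r)) b c‖ ≤ ‖cpTensor a b c‖ := by
  simp only [norm_cpTensor_eq_fiberA, fiberA_map]
  gcongr
  exact hL _

theorem norm_cpTensor_map_middle_le
    {F : Type*} [FunLike F (EuclideanSpace ℝ (Fin n)) (EuclideanSpace ℝ (Fin n))]
    [LinearMapClass F ℝ (EuclideanSpace ℝ (Fin n)) (EuclideanSpace ℝ (Fin n))] (L : F)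
    (hL : ∀ x, ‖L x‖ ≤ ‖x‖) :
    ‖cpTensor a (fun r => L (b r)) c‖ ≤ ‖cpTensor a b c‖ := by
  simp only [norm_cpTensor_eq_fiberB, fiberB_map]
  gcongr
  exact hL _

end CPTensor

/-- **Projecting the components of a low-rank decomposition loses at most `3ε`
(hybrid argument).** -/
theorem project_components_hybrid
    (m n p R : ℕ) (ε : ℝ)
    (a : Fin R → EuclideanSpace ℝ (Fin m))
    (b : Fin R → EuclideanSpace ℝ (Fin n))
    (c : Fin R → EuclideanSpace ℝ (Fin p))
    (VA : Submodule ℝ (EuclideanSpace ℝ (Fin m)))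
    (VB : Submodule ℝ (EuclideanSpace ℝ (Fin n)))
    (VC : Submodule ℝ (EuclideanSpace ℝ (Fin p)))
    (hA : Real.sqrt (∑ j, ∑ k,
      ‖fiberA a b c j k - (VA.orthogonalProjectionOnto (fiberA a b c j k) :
          EuclideanSpace ℝ (Fin m))‖ ^ 2) ≤ ε)
    (hB : Real.sqrt (∑ i, ∑ k,
      ‖fiberB a b c i k - (VB.orthogonalProjectionOnto (fiberB a b c i k) :
          EuclideanSpace ℝ (Fin n))‖ ^ 2) ≤ ε)
    (hC : Real.sqrt (∑ i, ∑ j,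
      ‖fiberC a b c i j - (VC.orthogonalProjectionOnto (fiberC a b c i j) :
          EuclideanSpace ℝ (Fin p))‖ ^ 2) ≤ ε) :
    Real.sqrt (∑ i, ∑ j, ∑ k,
        ((∑ r, a r i * b r j * c r k) -
          ∑ r, (VA.orthogonalProjectionOnto (a r) : EuclideanSpace ℝ (Fin m)) i *
            (VB.orthogonalProjectionOnto (b r) : EuclideanSpace ℝ (Fin n)) j *
            (VC.orthogonalProjectionOnto (c r) : EuclideanSpace ℝ (Fin p)) k) ^ 2)
      ≤ 3 * ε := by
  set a' := fun r => VA.starProjection (a r)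
  set b' := fun r => VB.starProjection (b r)
  set c' := fun r => VC.starProjection (c r)
  have hPA := VA.norm_starProjection_apply_le
  have hPB := VB.norm_starProjection_apply_le
  have h₁ : ‖cpTensor (a - a') b c‖ ≤ ε := by
    rw [show a - a' = _ from VA.sub_starProjection_comp a]
    simp only [norm_cpTensor_eq_fiberA, fiberA_map]
    simpa using hA
  have h₂ : ‖cpTensor a' (b - b') c‖ ≤ ε := by
    refine (norm_cpTensor_map_left_le _ _ _ _ hPA).trans ?_
    rw [show b - b' = _ from VB.sub_starProjection_comp b]
    simp only [norm_cpTensor_eq_fiberB, fiberB_map]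
    simpa using hB
  have h₃ : ‖cpTensor a' b' (c - c')‖ ≤ ε := by
    refine (norm_cpTensor_map_left_le _ _ _ _ hPA).trans ?_
    refine (norm_cpTensor_map_middle_le _ _ _ _ hPB).trans ?_
    rw [show c - c' = _ from VC.sub_starProjection_comp c]
    simp only [norm_cpTensor_eq_fiberC, fiberC_map]
    simpa using hC
  calc _ = ‖cpTensor a b c - cpTensor a' b' c'‖ := by
        rw [EuclideanSpace.norm_eq_sqrt_sum_sum_sum]; rfl
    _ ≤ ‖cpTensor (a - a') b c‖ + ‖cpTensor a' (b - b') c‖ + ‖cpTensor a' b' (c - c')‖ := by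
        rw [cpTensor_sub_cpTensor]; exact norm_add₃_le
    _ ≤ 3 * ε := by linarith
end
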